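/- For any real positive definite 2n×2n matrix A, the matrix A # (Ω A⁻¹ Ωᵀ) satisfies the Heisenberg uncertainty relation, i.e., A#(ΩA⁻¹Ωᵀ) + iΩ ≥ 0 as a complex Hermitian matrix; in fact all symplectic eigenvalues of A#(ΩA⁻¹Ωᵀ) equal 1. -/

import Mathlib

open Matrix
open scoped ComplexOrder

/-- Total matrix square root: the PSD square root on PSD matrices, `0` elsewhere. -/
noncomputable def msqrt {𝕜 : Type*} [RCLike 𝕜] {n : Type*} [Fintype n] [DecidableEq n]
    (A : Matrix n n 𝕜) : Matrix n n 𝕜 :=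
  letI := Classical.dec A.PosSemidef
  if h : A.PosSemidef then
    (h.1.eigenvectorUnitary : Matrix n n 𝕜) *
      diagonal ((↑) ∘ (Real.sqrt ·) ∘ h.1.eigenvalues) *
      (star h.1.eigenvectorUnitary : Matrix n n 𝕜)
  else 0

/-- The matrix geometric mean `A # B = A^{1/2} (A^{-1/2} B A^{-1/2})^{1/2} A^{1/2}`. -/
noncomputable def geomMean {𝕜 : Type*} [RCLike 𝕜] {n : Type*} [Fintype n] [DecidableEq n]
    (A B : Matrix n n 𝕜) : Matrix n n 𝕜 :=
  msqrt A * msqrt ((msqrt A)⁻¹ * B * (msqrt A)⁻¹) * msqrt A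

/-- The standard symplectic form `Ω = [[0, I],[-I, 0]]` in position-momentum ordering. -/
def symForm (n : ℕ) : Matrix (Fin n ⊕ Fin n) (Fin n ⊕ Fin n) ℝ :=
  Matrix.fromBlocks 0 1 (-1) 0

/-!
`G = A # B` is the unique positive solution of the Riccati equation `G A⁻¹ G = B`. With
Mathlib's `J = -Ω`, for `B = J A⁻¹ Jᵀ` the matrix `J G⁻¹ Jᵀ` is another positive solution, so
`G = J G⁻¹ Jᵀ`, i.e. `G` is symplectic. Since the square root commutes with inversion and with
conjugation by the orthogonal matrix `J`, `R = √G` is symplectic as well. Then `S = R⁻¹` brings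
`G = R Rᵀ` to `1`, and `G + iΩ = R (1 + iΩ) Rᵀ ≥ 0` because `(1 + iΩ) / 2` is a Hermitian
projection.
-/

open scoped MatrixOrder

namespace Matrix
variable {𝕜 n : Type*} [RCLike 𝕜] [Fintype n] [DecidableEq n]

theorem msqrt_eq_sqrt (A : Matrix n n 𝕜) : msqrt A = CFC.sqrt A := by
  by_cases hA : A.PosSemidef
  · rw [CFC.sqrt_eq_real_sqrt A hA.nonneg, cfcₙ_eq_cfc, hA.1.cfc_eq, msqrt, dif_pos hA,
      IsHermitian.cfc, Unitary.conjStarAlgAut_apply]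
  · rw [msqrt, dif_neg hA, CFC.sqrt_of_not_nonneg (mt nonneg_iff_posSemidef.mp hA)]

theorem sqrt_unitary_conj {U : Matrix n n 𝕜} (hU : U ∈ unitary (Matrix n n 𝕜)) {A : Matrix n n 𝕜}
    (hA : A.PosSemidef) : CFC.sqrt (U * A * star U) = U * CFC.sqrt A * star U := by
  refine CFC.sqrt_unique ?_ (star_right_conjugate_nonneg (CFC.sqrt_nonneg A) U)
  calc U * CFC.sqrt A * star U * (U * CFC.sqrt A * star U)
      = U * CFC.sqrt A * (star U * U) * CFC.sqrt A * star U := by noncomm_ring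
    _ = U * A * star U := by
      rw [Unitary.star_mul_self_of_mem hU, mul_one, mul_assoc U, CFC.sqrt_mul_sqrt_self A hA.nonneg]

variable {A X s : Matrix n n 𝕜}

theorem PosDef.sqrt (hA : A.PosDef) : (CFC.sqrt A).PosDef :=
  hA.isStrictlyPositive.sqrt.posDef

theorem PosSemidef.inv_eq_inv_sqrt_mul_inv_sqrt (hA : A.PosSemidef) :
    A⁻¹ = (CFC.sqrt A)⁻¹ * (CFC.sqrt A)⁻¹ := by
  rw [← mul_inv_rev, CFC.sqrt_mul_sqrt_self A hA.nonneg]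

theorem PosDef.conj_posDef_iff (hs : s.PosDef) : (s * X * s).PosDef ↔ X.PosDef := by
  simpa only [star_eq_conjTranspose, hs.1.eq] using hs.isUnit.posDef_star_right_conjugate_iff

theorem PosDef.inv_conj_posSemidef_iff (hs : s.PosDef) :
    (s⁻¹ * X * s⁻¹).PosSemidef ↔ X.PosSemidef := by
  simpa only [star_eq_conjTranspose, conjTranspose_nonsing_inv, hs.1.eq] using
    hs.inv.isUnit.posSemidef_star_right_conjugate_iff

theorem PosDef.inv_conj_posDef_iff (hs : s.PosDef) :
    (s⁻¹ * X * s⁻¹).PosDef ↔ X.PosDef := by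
  simpa only [star_eq_conjTranspose, conjTranspose_nonsing_inv, hs.1.eq] using
    hs.inv.isUnit.posDef_star_right_conjugate_iff

theorem conj_inv_conj (hs : IsUnit s) (X : Matrix n n 𝕜) : s * (s⁻¹ * X * s⁻¹) * s = X := by
  have hdet := (isUnit_iff_isUnit_det s).mp hs
  simp only [mul_assoc, nonsing_inv_mul _ hdet, mul_one, mul_nonsing_inv_cancel_left _ _ hdet]

theorem inv_conj_conj (hs : IsUnit s) (X : Matrix n n 𝕜) : s⁻¹ * (s * X * s) * s⁻¹ = X := by
  have hdet := (isUnit_iff_isUnit_det s).mp hs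
  simp only [mul_assoc, mul_nonsing_inv _ hdet, mul_one, nonsing_inv_mul_cancel_left _ _ hdet]

omit [Fintype n] [DecidableEq n] in
theorem PosDef.transpose_eq_self {G : Matrix n n ℝ} (hG : G.PosDef) : Gᵀ = G :=
  (isHermitian_iff_isSymm.mp hG.1).eq

end Matrix

section geomMean
variable {𝕜 n : Type*} [RCLike 𝕜] [Fintype n] [DecidableEq n] {A B X : Matrix n n 𝕜}

theorem geomMean_eq_sqrt (A B : Matrix n n 𝕜) : geomMean A B =
    CFC.sqrt A * CFC.sqrt ((CFC.sqrt A)⁻¹ * B * (CFC.sqrt A)⁻¹) * CFC.sqrt A := by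
  simp only [geomMean, msqrt_eq_sqrt]

theorem geomMean_posDef (hA : A.PosDef) (hB : B.PosDef) : (geomMean A B).PosDef := by
  rw [geomMean_eq_sqrt, hA.sqrt.conj_posDef_iff]
  exact (hA.sqrt.inv_conj_posDef_iff.mpr hB).sqrt

theorem geomMean_mul_inv_mul_geomMean (hA : A.PosDef) (hB : B.PosSemidef) :
    geomMean A B * A⁻¹ * geomMean A B = B := by
  set s := CFC.sqrt A
  set c := CFC.sqrt (s⁻¹ * B * s⁻¹)
  have hdet : IsUnit s.det := (isUnit_iff_isUnit_det s).mp hA.sqrt.isUnit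
  calc geomMean A B * A⁻¹ * geomMean A B = s * c * s * (s⁻¹ * s⁻¹) * (s * c * s) := by
        rw [geomMean_eq_sqrt, hA.posSemidef.inv_eq_inv_sqrt_mul_inv_sqrt]
    _ = s * (c * c) * s := by
        simp only [mul_assoc, mul_nonsing_inv_cancel_left _ _ hdet,
          nonsing_inv_mul_cancel_left _ _ hdet]
    _ = B := by
        rw [CFC.sqrt_mul_sqrt_self _ (hA.sqrt.inv_conj_posSemidef_iff.mpr hB).nonneg,
          conj_inv_conj hA.sqrt.isUnit]

theorem eq_geomMean_of_mul_inv_mul_self (hA : A.PosDef) (hX : X.PosSemidef)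
    (h : X * A⁻¹ * X = B) : X = geomMean A B := by
  have hsq : ((CFC.sqrt A)⁻¹ * X * (CFC.sqrt A)⁻¹) * ((CFC.sqrt A)⁻¹ * X * (CFC.sqrt A)⁻¹) =
      (CFC.sqrt A)⁻¹ * B * (CFC.sqrt A)⁻¹ := by
    rw [← h, hA.posSemidef.inv_eq_inv_sqrt_mul_inv_sqrt]
    simp only [mul_assoc]
  rw [geomMean_eq_sqrt, ← hsq, CFC.sqrt_mul_self _ (hA.sqrt.inv_conj_posSemidef_iff.mpr hX).nonneg,
    conj_inv_conj hA.sqrt.isUnit]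

end geomMean

section symplectic
variable {l : Type*} [Fintype l] [DecidableEq l]

theorem J_mul_J_transpose {R : Type*} [CommRing R] : J l R * (J l R)ᵀ = 1 := by
  rw [J_transpose, mul_neg, J_squared, neg_neg]

theorem J_transpose_mul_J {R : Type*} [CommRing R] : (J l R)ᵀ * J l R = 1 := by
  rw [J_transpose, neg_mul, J_squared, neg_neg]

omit [Fintype l] in
theorem conjTranspose_J {R : Type*} [CommRing R] [StarRing R] : (J l R)ᴴ = -J l R := by
  simp [J, fromBlocks_conjTranspose, fromBlocks_neg]

theorem J_mem_unitary {R : Type*} [CommRing R] [StarRing R] :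
    J l R ∈ unitary (Matrix (l ⊕ l) (l ⊕ l) R) := by
  rw [Unitary.mem_iff, star_eq_conjTranspose, conjTranspose_J, ← J_transpose]
  exact ⟨J_transpose_mul_J, J_mul_J_transpose⟩

theorem mem_symplecticGroup_iff_J_mul_inv_transpose {R : Type*} [CommRing R]
    {S : Matrix (l ⊕ l) (l ⊕ l) R} (hS : IsUnit S) :
    S ∈ symplecticGroup l R ↔ J l R * (Sᵀ)⁻¹ * (J l R)ᵀ = S := by
  have hdet : IsUnit Sᵀ.det := by rw [det_transpose]; exact (isUnit_iff_isUnit_det S).mp hS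
  rw [SymplecticGroup.mem_iff]
  constructor
  · intro h
    calc J l R * (Sᵀ)⁻¹ * (J l R)ᵀ = S * J l R * Sᵀ * (Sᵀ)⁻¹ * (J l R)ᵀ := by rw [h]
      _ = S := by
        rw [mul_nonsing_inv_cancel_right _ _ hdet, mul_assoc, J_mul_J_transpose, mul_one]
  · intro h
    calc S * J l R * Sᵀ = J l R * (Sᵀ)⁻¹ * (J l R)ᵀ * J l R * Sᵀ := by rw [h]
      _ = J l R := by
        rw [mul_assoc (J l R * _), J_transpose_mul_J, mul_one,
          nonsing_inv_mul_cancel_right _ _ hdet]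

theorem Matrix.PosDef.J_mul_mul_J_transpose {A : Matrix (l ⊕ l) (l ⊕ l) ℝ} (hA : A.PosDef) :
    (J l ℝ * A * (J l ℝ)ᵀ).PosDef := by
  have hJ : IsUnit (J l ℝ) := (isUnit_iff_isUnit_det _).mpr (isUnit_det_J l ℝ)
  have := hJ.posDef_star_right_conjugate_iff.mpr hA
  rwa [star_eq_conjTranspose, conjTranspose_eq_transpose_of_trivial] at this

theorem geomMean_mem_symplecticGroup {A : Matrix (l ⊕ l) (l ⊕ l) ℝ} (hA : A.PosDef) :
    geomMean A (J l ℝ * A⁻¹ * (J l ℝ)ᵀ) ∈ symplecticGroup l ℝ := by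
  set B := J l ℝ * A⁻¹ * (J l ℝ)ᵀ
  have hB : B.PosDef := hA.inv.J_mul_mul_J_transpose
  set G := geomMean A B
  have hG : G.PosDef := geomMean_posDef hA hB
  have hJAJ : (J l ℝ)ᵀ * A⁻¹ * J l ℝ = B := by simp [B, J_transpose]
  rw [mem_symplecticGroup_iff_J_mul_inv_transpose hG.isUnit, hG.transpose_eq_self]
  refine eq_geomMean_of_mul_inv_mul_self hA ?_ ?_
  · have := hG.inv.posSemidef.mul_mul_conjTranspose_same (J l ℝ)
    rwa [conjTranspose_eq_transpose_of_trivial] at this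
  · calc J l ℝ * G⁻¹ * (J l ℝ)ᵀ * A⁻¹ * (J l ℝ * G⁻¹ * (J l ℝ)ᵀ)
          = J l ℝ * (G⁻¹ * ((J l ℝ)ᵀ * A⁻¹ * J l ℝ) * G⁻¹) * (J l ℝ)ᵀ := by
          simp only [mul_assoc]
      _ = J l ℝ * (G⁻¹ * (G * A⁻¹ * G) * G⁻¹) * (J l ℝ)ᵀ := by
          rw [hJAJ, geomMean_mul_inv_mul_geomMean hA hB.posSemidef]
      _ = B := by rw [inv_conj_conj hG.isUnit]

theorem sqrt_mem_symplecticGroup {G : Matrix (l ⊕ l) (l ⊕ l) ℝ} (hG : G.PosDef)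
    (hGs : G ∈ symplecticGroup l ℝ) : CFC.sqrt G ∈ symplecticGroup l ℝ := by
  have hJ_star : (J l ℝ)ᵀ = star (J l ℝ) := by
    rw [star_eq_conjTranspose, conjTranspose_J, J_transpose]
  rw [mem_symplecticGroup_iff_J_mul_inv_transpose hG.isUnit, hG.transpose_eq_self] at hGs
  rw [mem_symplecticGroup_iff_J_mul_inv_transpose hG.sqrt.isUnit, hG.sqrt.transpose_eq_self]
  conv_rhs => rw [← hGs]
  rw [hJ_star, sqrt_unitary_conj J_mem_unitary hG.inv.posSemidef, hG.posSemidef.inv_sqrt]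

theorem exists_mem_symplecticGroup_mul_transpose_eq {G : Matrix (l ⊕ l) (l ⊕ l) ℝ}
    (hG : G.PosDef) (hGs : G ∈ symplecticGroup l ℝ) :
    ∃ R ∈ symplecticGroup l ℝ, R * Rᵀ = G :=
  ⟨CFC.sqrt G, sqrt_mem_symplecticGroup hG hGs, by
    rw [hG.sqrt.transpose_eq_self, CFC.sqrt_mul_sqrt_self G hG.posSemidef.nonneg]⟩

theorem isStarProjection_half_one_sub_I_smul_J :
    IsStarProjection ((2 : ℂ)⁻¹ • (1 - Complex.I • J l ℂ)) := by
  have hsq : (Complex.I • J l ℂ) * (Complex.I • J l ℂ) = 1 := by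
    rw [smul_mul_smul_comm, Complex.I_mul_I, J_squared, neg_smul, one_smul, neg_neg]
  have hidem : (1 - Complex.I • J l ℂ) * (1 - Complex.I • J l ℂ) =
      (2 : ℂ) • (1 - Complex.I • J l ℂ) := by
    rw [sub_mul, mul_sub, mul_sub, hsq, two_smul]
    noncomm_ring
  refine ⟨?_, ?_⟩
  · rw [IsIdempotentElem, smul_mul_smul_comm, hidem, smul_smul]
    norm_num
  · rw [IsSelfAdjoint, star_smul, star_sub, star_one, star_smul, star_eq_conjTranspose (J l ℂ),
      conjTranspose_J]
    simp

theorem posSemidef_one_sub_I_smul_J : (1 - Complex.I • J l ℂ).PosSemidef := by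
  have := (isStarProjection_half_one_sub_I_smul_J (l := l)).nonneg.posSemidef.smul
    (a := (2 : ℂ)) (by norm_num)
  rwa [smul_smul, mul_inv_cancel₀ two_ne_zero, one_smul] at this

theorem posSemidef_map_mul_transpose_sub_I_smul_J {S : Matrix (l ⊕ l) (l ⊕ l) ℝ}
    (hS : S ∈ symplecticGroup l ℝ) :
    ((S * Sᵀ).map Complex.ofReal - Complex.I • J l ℂ).PosSemidef := by
  have hmap : ∀ M N : Matrix (l ⊕ l) (l ⊕ l) ℝ,
      (M * N).map Complex.ofReal = M.map Complex.ofReal * N.map Complex.ofReal :=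
    fun M N => Matrix.map_mul (f := Complex.ofRealHom)
  have hT : (S.map Complex.ofReal)ᴴ = Sᵀ.map Complex.ofReal := by ext; simp
  have hJ : S.map Complex.ofReal * J l ℂ * Sᵀ.map Complex.ofReal = J l ℂ := by
    have hJc : (J l ℝ).map Complex.ofReal = J l ℂ := map_J l Complex.ofRealHom
    rw [← hJc, ← hmap, ← hmap, SymplecticGroup.mem_iff.mp hS]
  have key : (S * Sᵀ).map Complex.ofReal - Complex.I • J l ℂ =
      S.map Complex.ofReal * (1 - Complex.I • J l ℂ) * (S.map Complex.ofReal)ᴴ := by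
    rw [hT, mul_sub, sub_mul, mul_one, mul_smul_comm, smul_mul_assoc, hJ, hmap]
  rw [key]
  exact posSemidef_one_sub_I_smul_J.mul_mul_conjTranspose_same _

end symplectic

theorem symForm_eq_neg_J (n : ℕ) : symForm n = -J (Fin n) ℝ := by
  simp [symForm, J, fromBlocks_neg]

theorem symForm_map_ofReal (n : ℕ) : (symForm n).map Complex.ofReal = -J (Fin n) ℂ := by
  rw [symForm_eq_neg_J, Matrix.map_neg _ Complex.ofReal_neg]
  exact congrArg Neg.neg (map_J _ Complex.ofRealHom)

/-- For any real positive definite `A`, the matrix `A # (Ω A⁻¹ Ωᵀ)` satisfies the Heisenberg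
uncertainty relation; in fact all of its symplectic eigenvalues equal `1`. -/
theorem geomMean_is_pure_qcm (n : ℕ)
    (A : Matrix (Fin n ⊕ Fin n) (Fin n ⊕ Fin n) ℝ) (hA : A.PosDef) :
    ((geomMean A (symForm n * A⁻¹ * (symForm n)ᵀ)).map Complex.ofReal +
        Complex.I • (symForm n).map Complex.ofReal).PosSemidef ∧
      ∃ S : Matrix (Fin n ⊕ Fin n) (Fin n ⊕ Fin n) ℝ,
        S * symForm n * Sᵀ = symForm n ∧
        S * geomMean A (symForm n * A⁻¹ * (symForm n)ᵀ) * Sᵀ = 1 := by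
  have hΩ : symForm n * A⁻¹ * (symForm n)ᵀ = J (Fin n) ℝ * A⁻¹ * (J (Fin n) ℝ)ᵀ := by
    simp [symForm_eq_neg_J]
  obtain ⟨R, hR, hRG⟩ := exists_mem_symplecticGroup_mul_transpose_eq
    (geomMean_posDef hA hA.inv.J_mul_mul_J_transpose) (geomMean_mem_symplecticGroup hA)
  have hRinv : R⁻¹ ∈ symplecticGroup (Fin n) ℝ :=
    SymplecticGroup.coe_inv' ⟨R, hR⟩ ▸ (⟨R, hR⟩⁻¹ : symplecticGroup (Fin n) ℝ).2
  have hRdet := SymplecticGroup.symplectic_det hR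
  rw [hΩ, ← hRG]
  refine ⟨?_, R⁻¹, ?_, ?_⟩
  · rw [symForm_map_ofReal, smul_neg, ← sub_eq_add_neg]
    exact posSemidef_map_mul_transpose_sub_I_smul_J hR
  · rw [symForm_eq_neg_J, mul_neg, neg_mul, SymplecticGroup.mem_iff.mp hRinv]
  · rw [transpose_nonsing_inv, mul_assoc, mul_assoc, mul_nonsing_inv _ (by rwa [det_transpose]),
      mul_one, nonsing_inv_mul _ hRdet]
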